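/- If two vertex-cone collections 𝔊₁ and 𝔊₂ have equal supports, then their convex hull 𝔊₁ ⊕ 𝔊₂ is again a vertex-cone collection, and Supp(𝔊₁ ⊕ 𝔊₂) = Supp(𝔊₁) = Supp(𝔊₂). -/

import Mathlib

open scoped Pointwise RealInnerProductSpace

noncomputable section

/-- A vertex-cone collection: a finite nonempty set of vertices in W together with
full-dimensional convex polyhedral cones (in W*, identified with W via the inner
product) satisfying the defining inequalities ℓ(v) ≤ ℓ(u). -/
structure VCC (W : Type*) [NormedAddCommGroup W] [InnerProductSpace ℝ W] where
  verts : Set W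
  finite : verts.Finite
  nonempty : verts.Nonempty
  N : W → Set W
  polyhedral : ∀ v ∈ verts, ∃ s : Finset W, N v = {x | ∀ ℓ ∈ s, ⟪ℓ, x⟫ ≤ 0}
  fullDim : ∀ v ∈ verts, (interior (N v)).Nonempty
  ineq : ∀ v ∈ verts, ∀ u ∈ verts, ∀ ℓ ∈ N v, ⟪ℓ, v⟫ ≤ ⟪ℓ, u⟫

/-- The support of a vertex-cone collection. -/
def VCC.Supp {W : Type*} [NormedAddCommGroup W] [InnerProductSpace ℝ W] (G : VCC W) :
    Set W := ⋃ v ∈ G.verts, G.N v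

/-!
The hull cones are polyhedral, full-dimensional thanks to the strict-inequality witnesses, and
satisfy the vertex inequalities against both vertex sets, so the real content is that they still
cover the common support. A generic functional `ℓ` in the interior of a cone `N₁(v)` (off the
boundaries of the cones of `𝔊₂`, and separating the vertices) lies in the interior of some
`N₂(w)`: if `v = w` this is a vertex of type (a), and otherwise whichever of `v`, `w` is strictly
`ℓ`-smaller is a vertex of type (b) whose cone contains `ℓ`. Generic functionals are dense and
the union of the hull cones is closed, so it contains `N₁(v) ⊆ closure (interior N₁(v))`.
-/

open Set

theorem Set.Finite.dense_biInter {ι X : Type*} [TopologicalSpace X] {S : Set ι}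
    {f : ι → Set X} (hS : S.Finite) (ho : ∀ i ∈ S, IsOpen (f i)) (hd : ∀ i ∈ S, Dense (f i)) :
    Dense (⋂ i ∈ S, f i) := by
  rw [← sInter_image]
  exact (hS.image f).dense_sInter (forall_mem_image.2 ho) (forall_mem_image.2 hd)

theorem closure_subset_of_open_inter_dense {X : Type*} [TopologicalSpace X] {U D A : Set X}
    (hU : IsOpen U) (hD : Dense D) (hA : IsClosed A) (h : U ∩ D ⊆ A) : closure U ⊆ A :=
  closure_minimal ((hD.open_subset_closure_inter hU).trans (closure_minimal h hA)) hA

section InnerProductSpace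

variable {W : Type*} [NormedAddCommGroup W] [InnerProductSpace ℝ W]

theorem dense_setOf_inner_ne {v w : W} (hvw : v ≠ w) : Dense {ℓ : W | ⟪ℓ, v⟫ ≠ ⟪ℓ, w⟫} := by
  have hker : {ℓ : W | ⟪ℓ, v⟫ = ⟪ℓ, w⟫} = ((ℝ ∙ (v - w))ᗮ : Set W) := by
    ext ℓ
    simp [Submodule.mem_orthogonal_singleton_iff_inner_right, inner_sub_left, sub_eq_zero,
      real_inner_comm]
  have hint : interior {ℓ : W | ⟪ℓ, v⟫ = ⟪ℓ, w⟫} = ∅ := by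
    rw [hker, ← not_nonempty_iff_eq_empty]
    intro hne
    have htop := Submodule.eq_top_of_nonempty_interior' _ hne
    rw [Submodule.orthogonal_eq_top_iff, Submodule.span_singleton_eq_bot, sub_eq_zero] at htop
    exact hvw htop
  simpa only [compl_ofPred, not_not] using interior_eq_empty_iff_dense_compl.mp hint

theorem dense_setOf_injOn_inner {T : Set W} (hT : T.Finite) :
    Dense {ℓ : W | T.InjOn (⟪ℓ, ·⟫)} := by
  refine Dense.mono ?_ <| ((hT.prod hT).sdiff (t := diagonal W)).dense_biInter
    (f := fun p => {ℓ : W | ⟪ℓ, p.1⟫ ≠ ⟪ℓ, p.2⟫})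
    (fun _ _ => isOpen_ne_fun (by fun_prop) (by fun_prop))
    (fun p hp => dense_setOf_inner_ne hp.2)
  intro ℓ hℓ v hv w hw hvw
  by_contra hne
  exact mem_iInter₂.1 hℓ (v, w) ⟨⟨hv, hw⟩, hne⟩ hvw

def IsPolyhedralCone (C : Set W) : Prop :=
  ∃ s : Finset W, C = {x | ∀ ℓ ∈ s, ⟪ℓ, x⟫ ≤ 0}

theorem setOf_forall_inner_nonpos_eq_biInter (s : Finset W) :
    {x : W | ∀ ℓ ∈ s, ⟪ℓ, x⟫ ≤ 0} = ⋂ ℓ ∈ s, {x | ⟪ℓ, x⟫ ≤ 0} := by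
  ext
  simp

namespace IsPolyhedralCone

variable {C D : Set W}

theorem isClosed (hC : IsPolyhedralCone C) : IsClosed C := by
  obtain ⟨s, rfl⟩ := hC
  rw [setOf_forall_inner_nonpos_eq_biInter]
  exact isClosed_biInter fun ℓ _ => isClosed_le (continuous_const.inner continuous_id)
    continuous_const

theorem convex (hC : IsPolyhedralCone C) : Convex ℝ C := by
  obtain ⟨s, rfl⟩ := hC
  rw [setOf_forall_inner_nonpos_eq_biInter]
  exact convex_iInter₂ fun ℓ _ => convex_halfSpace_le (innerₛₗ ℝ ℓ).isLinear 0

theorem inter (hC : IsPolyhedralCone C) (hD : IsPolyhedralCone D) :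
    IsPolyhedralCone (C ∩ D) := by
  obtain ⟨s, rfl⟩ := hC
  obtain ⟨t, rfl⟩ := hD
  classical
  refine ⟨s ∪ t, ?_⟩
  ext
  simp [or_imp, forall_and]

end IsPolyhedralCone

theorem isPolyhedralCone_setOf_forall_inner_le {T : Set W} (hT : T.Finite) (v : W) :
    IsPolyhedralCone {ℓ : W | ∀ u ∈ T, ⟪ℓ, v⟫ ≤ ⟪ℓ, u⟫} := by
  classical
  refine ⟨hT.toFinset.image (v - ·), ?_⟩
  ext ℓ
  simp [inner_sub_left, real_inner_comm ℓ]

end InnerProductSpace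

namespace VCC

variable {W : Type*} [NormedAddCommGroup W] [InnerProductSpace ℝ W] {v w ℓ : W}

theorem isPolyhedralCone_N (G : VCC W) (hv : v ∈ G.verts) : IsPolyhedralCone (G.N v) :=
  G.polyhedral v hv

theorem N_subset_supp (G : VCC W) (hv : v ∈ G.verts) : G.N v ⊆ G.Supp :=
  subset_biUnion_of_mem (u := G.N) hv

def coneMinOn (G : VCC W) (T : Set W) (v : W) : Set W :=
  {ℓ ∈ G.N v | ∀ u ∈ T, ⟪ℓ, v⟫ ≤ ⟪ℓ, u⟫}

section coneMinOn

variable (G : VCC W) {T : Set W}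

theorem coneMinOn_subset : G.coneMinOn T v ⊆ G.N v :=
  sep_subset _ _

theorem isPolyhedralCone_coneMinOn (hv : v ∈ G.verts) (hT : T.Finite) :
    IsPolyhedralCone (G.coneMinOn T v) :=
  (G.isPolyhedralCone_N hv).inter (isPolyhedralCone_setOf_forall_inner_le hT v)

theorem mem_interior_coneMinOn (hT : T.Finite) (hℓ : ℓ ∈ interior (G.N v))
    (hlt : ∀ u ∈ T, ⟪ℓ, v⟫ < ⟪ℓ, u⟫) : ℓ ∈ interior (G.coneMinOn T v) := by
  have hopen : IsOpen (interior (G.N v) ∩ ⋂ u ∈ T, {x : W | ⟪x, v⟫ < ⟪x, u⟫}) :=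
    isOpen_interior.inter <| hT.isOpen_biInter fun u _ =>
      isOpen_lt (continuous_id.inner continuous_const) (continuous_id.inner continuous_const)
  refine interior_maximal ?_ hopen ⟨hℓ, mem_iInter₂.2 hlt⟩
  rintro x ⟨hx, hxT⟩
  exact ⟨interior_subset hx, fun u hu => (mem_iInter₂.1 hxT u hu).le⟩

theorem inner_le_of_mem_coneMinOn (hv : v ∈ G.verts) (hℓ : ℓ ∈ G.coneMinOn T v) {u : W}
    (hu : u ∈ G.verts ∪ T) : ⟪ℓ, v⟫ ≤ ⟪ℓ, u⟫ :=
  hu.elim (G.ineq v hv u · ℓ hℓ.1) (hℓ.2 u)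

end coneMinOn

variable (G₁ G₂ : VCC W)

def hullVerts : Set W :=
  ({v | v ∈ G₁.verts ∧ v ∈ G₂.verts ∧ (interior (G₁.N v ∩ G₂.N v)).Nonempty} ∪
   {v | v ∈ G₁.verts ∧ v ∉ G₂.verts ∧
      ∃ ℓ ∈ interior (G₁.N v), ∀ u ∈ G₂.verts, ⟪ℓ, v⟫ < ⟪ℓ, u⟫} ∪
   {v | v ∈ G₂.verts ∧ v ∉ G₁.verts ∧
      ∃ ℓ ∈ interior (G₂.N v), ∀ u ∈ G₁.verts, ⟪ℓ, v⟫ < ⟪ℓ, u⟫})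

open Classical in
/-- The normal cones of `𝔊₁ ⊕ 𝔊₂`; the value off `G₁.verts ∪ G₂.verts` is junk. -/
def hullN (v : W) : Set W :=
  if v ∈ G₁.verts ∧ v ∈ G₂.verts then G₁.N v ∩ G₂.N v
  else if v ∈ G₁.verts then G₁.coneMinOn G₂.verts v
  else G₂.coneMinOn G₁.verts v

variable {G₁ G₂}

theorem hullN_of_mem_of_mem (h₁ : v ∈ G₁.verts) (h₂ : v ∈ G₂.verts) :
    hullN G₁ G₂ v = G₁.N v ∩ G₂.N v := by
  rw [hullN, if_pos ⟨h₁, h₂⟩]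

theorem hullN_of_mem_of_notMem (h₁ : v ∈ G₁.verts) (h₂ : v ∉ G₂.verts) :
    hullN G₁ G₂ v = G₁.coneMinOn G₂.verts v := by
  rw [hullN, if_neg fun h => h₂ h.2, if_pos h₁]

theorem hullN_of_notMem (h₁ : v ∉ G₁.verts) :
    hullN G₁ G₂ v = G₂.coneMinOn G₁.verts v := by
  rw [hullN, if_neg fun h => h₁ h.1, if_neg h₁]

theorem hullVerts_subset_union : hullVerts G₁ G₂ ⊆ G₁.verts ∪ G₂.verts := by
  rintro v ((⟨h₁, -⟩ | ⟨h₁, -⟩) | ⟨h₂, -⟩)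
  exacts [Or.inl h₁, Or.inl h₁, Or.inr h₂]

theorem isPolyhedralCone_hullN (hv : v ∈ hullVerts G₁ G₂) :
    IsPolyhedralCone (hullN G₁ G₂ v) := by
  rcases hv with (⟨h₁, h₂, -⟩ | ⟨h₁, h₂, -⟩) | ⟨h₂, h₁, -⟩
  · rw [hullN_of_mem_of_mem h₁ h₂]
    exact (G₁.isPolyhedralCone_N h₁).inter (G₂.isPolyhedralCone_N h₂)
  · rw [hullN_of_mem_of_notMem h₁ h₂]
    exact G₁.isPolyhedralCone_coneMinOn h₁ G₂.finite
  · rw [hullN_of_notMem h₁]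
    exact G₂.isPolyhedralCone_coneMinOn h₂ G₁.finite

theorem interior_hullN_nonempty (hv : v ∈ hullVerts G₁ G₂) :
    (interior (hullN G₁ G₂ v)).Nonempty := by
  rcases hv with (⟨h₁, h₂, hne⟩ | ⟨h₁, h₂, ℓ, hℓ, hlt⟩) | ⟨h₂, h₁, ℓ, hℓ, hlt⟩
  · rwa [hullN_of_mem_of_mem h₁ h₂]
  · rw [hullN_of_mem_of_notMem h₁ h₂]
    exact ⟨ℓ, G₁.mem_interior_coneMinOn G₂.finite hℓ hlt⟩
  · rw [hullN_of_notMem h₁]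
    exact ⟨ℓ, G₂.mem_interior_coneMinOn G₁.finite hℓ hlt⟩

theorem inner_le_of_mem_hullN (hv : v ∈ hullVerts G₁ G₂) (hℓ : ℓ ∈ hullN G₁ G₂ v) {u : W}
    (hu : u ∈ G₁.verts ∪ G₂.verts) : ⟪ℓ, v⟫ ≤ ⟪ℓ, u⟫ := by
  rcases hv with (⟨h₁, h₂, -⟩ | ⟨h₁, h₂, -⟩) | ⟨h₂, h₁, -⟩
  · rw [hullN_of_mem_of_mem h₁ h₂] at hℓ
    exact hu.elim (G₁.ineq v h₁ u · ℓ hℓ.1) (G₂.ineq v h₂ u · ℓ hℓ.2)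
  · rw [hullN_of_mem_of_notMem h₁ h₂] at hℓ
    exact G₁.inner_le_of_mem_coneMinOn h₁ hℓ hu
  · rw [hullN_of_notMem h₁] at hℓ
    exact G₂.inner_le_of_mem_coneMinOn h₂ hℓ (union_comm _ _ ▸ hu)

theorem hullN_subset_supp (heq : G₁.Supp = G₂.Supp) (hv : v ∈ hullVerts G₁ G₂) :
    hullN G₁ G₂ v ⊆ G₁.Supp := by
  rcases hv with (⟨h₁, h₂, -⟩ | ⟨h₁, h₂, -⟩) | ⟨h₂, h₁, -⟩
  · rw [hullN_of_mem_of_mem h₁ h₂]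
    exact inter_subset_left.trans (G₁.N_subset_supp h₁)
  · rw [hullN_of_mem_of_notMem h₁ h₂]
    exact (G₁.coneMinOn_subset).trans (G₁.N_subset_supp h₁)
  · rw [hullN_of_notMem h₁, heq]
    exact (G₂.coneMinOn_subset).trans (G₂.N_subset_supp h₂)

theorem exists_mem_hullN_of_mem_interior (hv : v ∈ G₁.verts) (hw : w ∈ G₂.verts)
    (h₁ : ℓ ∈ interior (G₁.N v)) (h₂ : ℓ ∈ interior (G₂.N w))
    (hsep : v ≠ w → ⟪ℓ, v⟫ ≠ ⟪ℓ, w⟫) : ∃ x ∈ hullVerts G₁ G₂, ℓ ∈ hullN G₁ G₂ x := by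
  rcases eq_or_ne v w with rfl | hvw
  · refine ⟨v, Or.inl (Or.inl ⟨hv, hw, ℓ, ?_⟩), ?_⟩
    · rw [interior_inter]
      exact ⟨h₁, h₂⟩
    · rw [hullN_of_mem_of_mem hv hw]
      exact ⟨interior_subset h₁, interior_subset h₂⟩
  rcases (hsep hvw).lt_or_gt with hlt | hgt
  · have hmin : ∀ u ∈ G₂.verts, ⟪ℓ, v⟫ < ⟪ℓ, u⟫ := fun u hu =>
      hlt.trans_le (G₂.ineq w hw u hu ℓ (interior_subset h₂))
    have hv₂ : v ∉ G₂.verts := fun h => (hmin v h).false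
    refine ⟨v, Or.inl (Or.inr ⟨hv, hv₂, ℓ, h₁, hmin⟩), ?_⟩
    rw [hullN_of_mem_of_notMem hv hv₂]
    exact ⟨interior_subset h₁, fun u hu => (hmin u hu).le⟩
  · have hmin : ∀ u ∈ G₁.verts, ⟪ℓ, w⟫ < ⟪ℓ, u⟫ := fun u hu =>
      hgt.trans_le (G₁.ineq v hv u hu ℓ (interior_subset h₁))
    have hw₁ : w ∉ G₁.verts := fun h => (hmin w h).false
    refine ⟨w, Or.inr ⟨hw, hw₁, ℓ, h₂, hmin⟩, ?_⟩
    rw [hullN_of_notMem hw₁]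
    exact ⟨interior_subset h₂, fun u hu => (hmin u hu).le⟩

theorem supp_subset_biUnion_hullN (heq : G₁.Supp = G₂.Supp) :
    G₁.Supp ⊆ ⋃ x ∈ hullVerts G₁ G₂, hullN G₁ G₂ x := by
  set D := (⋂ w ∈ G₂.verts, (frontier (G₂.N w))ᶜ) ∩
    {ℓ : W | (G₁.verts ∪ G₂.verts).InjOn (⟪ℓ, ·⟫)}
  have hD : Dense D := by
    refine Dense.inter_of_isOpen_left ?_ (dense_setOf_injOn_inner (G₁.finite.union G₂.finite))
      (G₂.finite.isOpen_biInter fun _ _ => isClosed_frontier.isOpen_compl)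
    refine G₂.finite.dense_biInter (fun _ _ => isClosed_frontier.isOpen_compl) fun w hw => ?_
    exact interior_eq_empty_iff_dense_compl.mp
      (interior_frontier (G₂.isPolyhedralCone_N hw).isClosed)
  have hclosed : IsClosed (⋃ x ∈ hullVerts G₁ G₂, hullN G₁ G₂ x) :=
    ((G₁.finite.union G₂.finite).subset hullVerts_subset_union).isClosed_biUnion
      fun x hx => (isPolyhedralCone_hullN hx).isClosed
  refine iUnion₂_subset fun v hv => ?_
  have hN₁ := G₁.isPolyhedralCone_N hv
  calc G₁.N v ⊆ closure (interior (G₁.N v)) := by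
        rw [hN₁.convex.closure_interior_eq_closure_of_nonempty_interior (G₁.fullDim v hv)]
        exact subset_closure
    _ ⊆ _ := closure_subset_of_open_inter_dense isOpen_interior hD hclosed ?_
  rintro ℓ ⟨hℓv, hfr, hinj⟩
  obtain ⟨w, hw, hℓw⟩ := mem_iUnion₂.1 (heq ▸ G₁.N_subset_supp hv (interior_subset hℓv))
  have hℓw' : ℓ ∈ interior (G₂.N w) := by
    by_contra hint
    rw [mem_iInter₂] at hfr
    exact hfr w hw ((G₂.isPolyhedralCone_N hw).isClosed.frontier_eq ▸ ⟨hℓw, hint⟩)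
  obtain ⟨x, hx, hℓx⟩ := exists_mem_hullN_of_mem_interior hv hw hℓv hℓw'
    (hinj.ne (Or.inl hv) (Or.inr hw))
  exact mem_biUnion hx hℓx

/-- The convex hull `𝔊₁ ⊕ 𝔊₂`. -/
def hull (G₁ G₂ : VCC W) (heq : G₁.Supp = G₂.Supp) : VCC W where
  verts := hullVerts G₁ G₂
  finite := (G₁.finite.union G₂.finite).subset hullVerts_subset_union
  nonempty := by
    obtain ⟨v, hv⟩ := G₁.nonempty
    obtain ⟨ℓ, hℓ⟩ := G₁.fullDim v hv
    obtain ⟨x, hx, -⟩ := mem_iUnion₂.1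
      (supp_subset_biUnion_hullN heq (G₁.N_subset_supp hv (interior_subset hℓ)))
    exact ⟨x, hx⟩
  N := hullN G₁ G₂
  polyhedral _ hv := isPolyhedralCone_hullN hv
  fullDim _ hv := interior_hullN_nonempty hv
  ineq _ hv _ hu _ hℓ := inner_le_of_mem_hullN hv hℓ (hullVerts_subset_union hu)

theorem supp_hull (heq : G₁.Supp = G₂.Supp) : (hull G₁ G₂ heq).Supp = G₁.Supp :=
  Subset.antisymm (iUnion₂_subset fun _ hv => hullN_subset_supp heq hv)
    (supp_subset_biUnion_hullN heq)

end VCC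

theorem stmt_10_general {W : Type*} [NormedAddCommGroup W] [InnerProductSpace ℝ W]
    (G₁ G₂ : VCC W)
    (heq : G₁.Supp = G₂.Supp) :
    ∃ G : VCC W,
      G.verts =
        ({v | v ∈ G₁.verts ∧ v ∈ G₂.verts ∧ (interior (G₁.N v ∩ G₂.N v)).Nonempty} ∪
         {v | v ∈ G₁.verts ∧ v ∉ G₂.verts ∧
            ∃ ℓ ∈ interior (G₁.N v), ∀ u ∈ G₂.verts, ⟪ℓ, v⟫ < ⟪ℓ, u⟫} ∪
         {v | v ∈ G₂.verts ∧ v ∉ G₁.verts ∧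
            ∃ ℓ ∈ interior (G₂.N v), ∀ u ∈ G₁.verts, ⟪ℓ, v⟫ < ⟪ℓ, u⟫}) ∧
      (∀ v ∈ G.verts, v ∈ G₁.verts → v ∈ G₂.verts →
        G.N v = G₁.N v ∩ G₂.N v) ∧
      (∀ v ∈ G.verts, v ∈ G₁.verts → v ∉ G₂.verts →
        G.N v = {ℓ ∈ G₁.N v | ∀ u ∈ G₂.verts, ⟪ℓ, v⟫ ≤ ⟪ℓ, u⟫}) ∧
      (∀ v ∈ G.verts, v ∈ G₂.verts → v ∉ G₁.verts →
        G.N v = {ℓ ∈ G₂.N v | ∀ u ∈ G₁.verts, ⟪ℓ, v⟫ ≤ ⟪ℓ, u⟫}) ∧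
      G.Supp = G₁.Supp :=
  ⟨VCC.hull G₁ G₂ heq, rfl,
    fun _ _ h₁ h₂ => VCC.hullN_of_mem_of_mem h₁ h₂,
    fun _ _ h₁ h₂ => VCC.hullN_of_mem_of_notMem h₁ h₂,
    fun _ _ _ h₁ => VCC.hullN_of_notMem h₁,
    VCC.supp_hull heq⟩

/-- the convex hull of two vertex-cone collections with equal
supports is again a vertex-cone collection, with the prescribed vertex set and
normal cones, and Supp(𝔊₁ ⊕ 𝔊₂) = Supp(𝔊₁) = Supp(𝔊₂). -/
theorem stmt_10 {W : Type*} [NormedAddCommGroup W] [InnerProductSpace ℝ W]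
    [FiniteDimensional ℝ W] (G₁ G₂ : VCC W)
    (heq : G₁.Supp = G₂.Supp) :
    ∃ G : VCC W,
      G.verts =
        ({v | v ∈ G₁.verts ∧ v ∈ G₂.verts ∧ (interior (G₁.N v ∩ G₂.N v)).Nonempty} ∪
         {v | v ∈ G₁.verts ∧ v ∉ G₂.verts ∧
            ∃ ℓ ∈ interior (G₁.N v), ∀ u ∈ G₂.verts, ⟪ℓ, v⟫ < ⟪ℓ, u⟫} ∪
         {v | v ∈ G₂.verts ∧ v ∉ G₁.verts ∧
            ∃ ℓ ∈ interior (G₂.N v), ∀ u ∈ G₁.verts, ⟪ℓ, v⟫ < ⟪ℓ, u⟫}) ∧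
      (∀ v ∈ G.verts, v ∈ G₁.verts → v ∈ G₂.verts →
        G.N v = G₁.N v ∩ G₂.N v) ∧
      (∀ v ∈ G.verts, v ∈ G₁.verts → v ∉ G₂.verts →
        G.N v = {ℓ ∈ G₁.N v | ∀ u ∈ G₂.verts, ⟪ℓ, v⟫ ≤ ⟪ℓ, u⟫}) ∧
      (∀ v ∈ G.verts, v ∈ G₂.verts → v ∉ G₁.verts →
        G.N v = {ℓ ∈ G₂.N v | ∀ u ∈ G₁.verts, ⟪ℓ, v⟫ ≤ ⟪ℓ, u⟫}) ∧
      G.Supp = G₁.Supp :=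
  stmt_10_general G₁ G₂ heq
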